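/- Let Σ be an n-simplex with vertices a₁,…,a_{n+1} in a real normed space X, and let c be a relative interior point of Σ. There exists δ > 0 such that whenever x₁,…,x_{n+1} ∈ aff(Σ) satisfy ‖xₖ − aₖ‖ < δ for each k, the points x₁,…,x_{n+1} are affinely independent and c is a relative interior point of the n-simplex co{x₁,…,x_{n+1}}. -/

import Mathlib

/-!
Affine independence of `a₁, …, a_{n+1}` is the linear independence of the `n` edge vectors at
`a_{n+1}`, and linear independence of finitely many vectors is an open condition.

For the interior point no barycentric coordinates are needed: if every `xₖ` lies within `δ`
of `aₖ`, then `co{a}` lies in the `δ`-thickening of the closed convex set `co{x}`. A point `y` of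
`aff(Σ)` near `c` but outside `co{x}` is strictly separated from `co{x}` by a functional `f`;
pushing `y` inside `aff(Σ)` in a direction where `f` almost attains its norm on the direction of
`aff(Σ)` stays in `co{a}` but moves farther than `δ` away from `co{x}`, a contradiction.
-/

open Set Metric Filter Topology

theorem eventually_linearIndependent_sub_last {𝕜 E : Type*} [NontriviallyNormedField 𝕜]
    [CompleteSpace 𝕜] [NormedAddCommGroup E] [NormedSpace 𝕜 E] {n : ℕ} {a : Fin (n + 1) → E}
    (ha : LinearIndependent 𝕜 fun k : Fin n => a k.castSucc - a (Fin.last n)) :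
    ∀ᶠ x in 𝓝 a, LinearIndependent 𝕜 fun k : Fin n => x k.castSucc - x (Fin.last n) :=
  have hedges : Continuous fun (x : Fin (n + 1) → E) (k : Fin n) =>
      x k.castSucc - x (Fin.last n) := by
    fun_prop
  (hedges.tendsto a).eventually (p := fun v => LinearIndependent 𝕜 v) ha.eventually

theorem convexHull_range_subset_thickening {E ι : Type*} [NormedAddCommGroup E]
    [NormedSpace ℝ E] {a x : ι → E} {δ : ℝ} (h : ∀ k, dist (a k) (x k) < δ) :
    convexHull ℝ (range a) ⊆ thickening δ (convexHull ℝ (range x)) :=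
  convexHull_min
    (range_subset_iff.2 fun k =>
      mem_thickening_iff.2 ⟨x k, subset_convexHull ℝ _ (mem_range_self k), h k⟩)
    ((convex_convexHull ℝ _).thickening δ)

theorem ContinuousLinearMap.norm_le_of_forall_norm_lt_one_apply_le {E : Type*}
    [NormedAddCommGroup E] [NormedSpace ℝ E] {g : E →L[ℝ] ℝ} {C : ℝ}
    (h : ∀ u, ‖u‖ < 1 → g u ≤ C) : ‖g‖ ≤ C := by
  by_contra! hlt
  obtain ⟨u, hu, hgu⟩ := g.exists_lt_apply_of_lt_opNorm hlt
  rcases lt_abs.1 (Real.norm_eq_abs (g u) ▸ hgu) with hgu | hgu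
  · linarith [h u hu]
  · linarith [h (-u) (by rwa [norm_neg]), map_neg g u]

theorem Convex.ball_inter_subset_of_ball_inter_subset_thickening {E : Type*}
    [NormedAddCommGroup E] [NormedSpace ℝ E] {P : AffineSubspace ℝ E} {K : Set E}
    (hK : Convex ℝ K) (hK_closed : IsClosed K) (hKP : K ⊆ P) {c : E} {R δ : ℝ} (hδ : 0 ≤ δ)
    (h : ball c R ∩ P ⊆ Metric.thickening δ K) : ball c (R - δ) ∩ P ⊆ K := by
  rintro y ⟨hyc, hyP⟩
  by_contra hyK
  obtain ⟨f, s, hfK, hsy⟩ := geometric_hahn_banach_closed_point hK hK_closed hyK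
  set g : P.direction →L[ℝ] ℝ := f.comp P.direction.subtypeL
  have hclose : ∀ z ∈ ball c R ∩ (P : Set E), ∃ w ∈ K, f z - f w ≤ ‖g‖ * δ := by
    intro z hz
    obtain ⟨w, hwK, hzw⟩ := mem_thickening_iff.1 (h hz)
    refine ⟨w, hwK, ?_⟩
    let d : P.direction := ⟨z - w, AffineSubspace.vsub_mem_direction hz.2 (hKP hwK)⟩
    calc f z - f w = g d := by simp [g, d]
      _ ≤ ‖g d‖ := Real.le_norm_self _
      _ ≤ ‖g‖ * ‖d‖ := g.le_opNorm d
      _ ≤ ‖g‖ * δ := by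
        gcongr
        exact (dist_eq_norm z w ▸ hzw).le
  set t := R - dist y c
  have hδt : δ < t := by rw [mem_ball] at hyc; linarith
  have ht : 0 < t := hδ.trans_lt hδt
  -- `y + t • u` lies in `ball c R ∩ P`, hence is `δ`-close to some `w ∈ K`, while `f w < f y`.
  have hg_small : ‖g‖ ≤ ‖g‖ * δ / t := by
    refine g.norm_le_of_forall_norm_lt_one_apply_le fun u hu => ?_
    have hz : y + t • (u : E) ∈ ball c R ∩ (P : Set E) := by
      refine ⟨?_, by
        simpa [vadd_eq_add, add_comm] using
          AffineSubspace.vadd_mem_of_mem_direction (P.direction.smul_mem t u.2) hyP⟩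
      calc dist (y + t • (u : E)) c ≤ ‖t • (u : E)‖ + dist y c :=
            (dist_triangle _ y c).trans_eq (by rw [dist_self_add_left])
        _ = t * ‖u‖ + dist y c := by
          rw [norm_smul, Real.norm_of_nonneg ht.le]; rfl
        _ < R := by nlinarith
    obtain ⟨w, hwK, hw⟩ := hclose _ hz
    have : f (y + t • (u : E)) = f y + t * g u := by simp [g]
    rw [le_div_iff₀ ht]
    linarith [hfK w hwK]
  have hg : ‖g‖ = 0 := by
    rw [le_div_iff₀ ht] at hg_small
    nlinarith [norm_nonneg g]
  obtain ⟨w, hwK, hw⟩ := hclose y ⟨ball_subset_ball (by linarith) hyc, hyP⟩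
  rw [hg, zero_mul] at hw
  linarith [hfK w hwK]

theorem simplex_vertex_perturbation
    {X : Type*} [NormedAddCommGroup X] [NormedSpace ℝ X] {n : ℕ}
    (a : Fin (n + 1) → X)
    (hind : LinearIndependent ℝ fun k : Fin n => a k.castSucc - a (Fin.last n))
    (c : X)
    (hc : ∃ r > (0 : ℝ), Metric.ball c r ∩ (affineSpan ℝ (Set.range a) : Set X)
        ⊆ convexHull ℝ (Set.range a)) :
    ∃ δ > (0 : ℝ), ∀ x : Fin (n + 1) → X,
      (∀ k, x k ∈ affineSpan ℝ (Set.range a)) →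
      (∀ k, ‖x k - a k‖ < δ) →
      (LinearIndependent ℝ fun k : Fin n => x k.castSucc - x (Fin.last n)) ∧
      ∃ r > (0 : ℝ), Metric.ball c r ∩ (affineSpan ℝ (Set.range x) : Set X)
        ⊆ convexHull ℝ (Set.range x) := by
  obtain ⟨r, hr, hsub⟩ := hc
  obtain ⟨ε, hε, hLI⟩ :=
    Metric.eventually_nhds_iff.1 (eventually_linearIndependent_sub_last (𝕜 := ℝ) hind)
  refine ⟨min ε (r / 2), by positivity, fun x hxP hxa => ⟨hLI ?_, r / 2, half_pos hr, ?_⟩⟩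
  · exact (dist_pi_lt_iff hε).2 fun k =>
      (dist_eq_norm _ _).trans_lt ((hxa k).trans_le (min_le_left _ _))
  have hspan : affineSpan ℝ (range x) ≤ affineSpan ℝ (range a) :=
    affineSpan_le.2 (range_subset_iff.2 hxP)
  have hthick : ball c r ∩ (affineSpan ℝ (range a) : Set X) ⊆
      thickening (r / 2) (convexHull ℝ (range x)) :=
    hsub.trans <| convexHull_range_subset_thickening fun k => by
      rw [dist_comm, dist_eq_norm]
      exact (hxa k).trans_le (min_le_right _ _)
  have hball := (convex_convexHull ℝ (range x)).ball_inter_subset_of_ball_inter_subset_thickening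
    ((finite_range x).isClosed_convexHull (𝕜 := ℝ))
    ((convexHull_subset_affineSpan (𝕜 := ℝ) _).trans hspan) (by positivity) hthick
  rw [sub_half] at hball
  exact (inter_subset_inter_right _ hspan).trans hball
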